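/- arXiv:1702.02267 — 2 statements merged into one kernel-verified Lean document; each statement's English description precedes it below -/
import Mathlib

section
/- Let X, Y ∈ ℝ^{n×k} be orthonormal matrices and let X⊥, Y⊥ ∈ ℝ^{n×(n−k)} be orthonormal matrices whose columns span the orthogonal complements of the column spaces of X and Y, respectively. If XᵀY is invertible, then ‖X⊥ᵀ Y‖₂ / σ_k(XᵀY) = ‖X⊥ᵀ Y (XᵀY)^{-1}‖₂. -/
open Matrix

/-- Euclidean norm of a vector in `ℝ^k`. -/
noncomputable def vecNorm {k : ℕ} (v : Fin k → ℝ) : ℝ := Real.sqrt (∑ i, v i ^ 2)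

/-- Spectral norm (largest singular value) of a real matrix. -/
noncomputable def specNorm {m n : ℕ} (A : Matrix (Fin m) (Fin n) ℝ) : ℝ :=
  sSup {c : ℝ | ∃ x : Fin n → ℝ, vecNorm x = 1 ∧ c = vecNorm (A.mulVec x)}

/-- Least singular value of a square real matrix. -/
noncomputable def sigmaMin {k : ℕ} (B : Matrix (Fin k) (Fin k) ℝ) : ℝ :=
  sInf {c : ℝ | ∃ x : Fin k → ℝ, vecNorm x = 1 ∧ c = vecNorm (B.mulVec x)}

lemma vecNorm_nonneg {k : ℕ} (v : Fin k → ℝ) : 0 ≤ vecNorm v := Real.sqrt_nonneg _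

lemma vecNorm_sq {k : ℕ} (v : Fin k → ℝ) : vecNorm v ^ 2 = ∑ i, v i ^ 2 := by
  rw [vecNorm, Real.sq_sqrt (Finset.sum_nonneg fun i _ => sq_nonneg _)]

lemma vecNorm_eq_zero {k : ℕ} {v : Fin k → ℝ} (h : vecNorm v = 0) : v = 0 := by
  have h2 : ∑ i, v i ^ 2 = 0 := by
    have := vecNorm_sq v; rw [h] at this; linarith
  funext i
  have := (Finset.sum_eq_zero_iff_of_nonneg (fun i _ => sq_nonneg (v i))).mp h2 i (Finset.mem_univ i)
  exact pow_eq_zero_iff (by norm_num) |>.mp this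

lemma vecNorm_smul {k : ℕ} (t : ℝ) (v : Fin k → ℝ) : vecNorm (t • v) = |t| * vecNorm v := by
  have h : ∑ i, (t • v) i ^ 2 = t ^ 2 * ∑ i, v i ^ 2 := by
    rw [Finset.mul_sum]; exact Finset.sum_congr rfl fun i _ => by simp [mul_pow]
  rw [vecNorm, h, Real.sqrt_mul (sq_nonneg t), Real.sqrt_sq_eq_abs, vecNorm]

-- quadratic form
lemma vecNorm_mulVec_sq {k m : ℕ} (A : Matrix (Fin m) (Fin k) ℝ) (x : Fin k → ℝ) :
    vecNorm (A.mulVec x) ^ 2 = x ⬝ᵥ (Aᵀ * A).mulVec x := by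
  have h : (A *ᵥ x) ⬝ᵥ (A *ᵥ x) = x ⬝ᵥ (Aᵀ * A) *ᵥ x := by
    rw [← mulVec_mulVec, dotProduct_mulVec, mulVec_transpose, dotProduct_comm]
  rw [vecNorm_sq, ← h]; simp [dotProduct, sq]

lemma key_identity {k m m' : ℕ} (A : Matrix (Fin m) (Fin k) ℝ) (B : Matrix (Fin m') (Fin k) ℝ)
    (h : Aᵀ * A + Bᵀ * B = 1) (x : Fin k → ℝ) :
    vecNorm (A.mulVec x) ^ 2 + vecNorm (B.mulVec x) ^ 2 = vecNorm x ^ 2 := by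
  rw [vecNorm_mulVec_sq, vecNorm_mulVec_sq, ← dotProduct_add, ← add_mulVec, h, one_mulVec,
    vecNorm_sq]
  simp [dotProduct, sq]

lemma vecNorm_continuous {k : ℕ} : Continuous (vecNorm (k := k)) := by
  exact Real.continuous_sqrt.comp (continuous_finset_sum _ fun i _ => (continuous_apply i).pow 2)

lemma sphere_compact {k : ℕ} : IsCompact {x : Fin k → ℝ | vecNorm x = 1} := by
  apply Metric.isCompact_of_isClosed_isBounded
  · exact isClosed_eq vecNorm_continuous continuous_const
  · apply Metric.isBounded_iff_subset_closedBall 0 |>.mpr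
    refine ⟨1, fun x hx => ?_⟩
    simp only [Metric.mem_closedBall, dist_zero_right]
    rw [pi_norm_le_iff_of_nonneg zero_le_one]
    intro i
    have h1 : (x i) ^ 2 ≤ ∑ j, x j ^ 2 :=
      Finset.single_le_sum (fun j _ => sq_nonneg (x j)) (Finset.mem_univ i)
    have h2 : ∑ j, x j ^ 2 = 1 := by
      have := vecNorm_sq x; rw [hx] at this; linarith
    rw [Real.norm_eq_abs, ← Real.sqrt_sq_eq_abs]
    calc Real.sqrt ((x i)^2) ≤ Real.sqrt 1 := Real.sqrt_le_sqrt (by linarith)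
    _ = 1 := Real.sqrt_one

lemma sphere_nonempty {k : ℕ} (hk : 0 < k) : ({x : Fin k → ℝ | vecNorm x = 1}).Nonempty := by
  refine ⟨(Pi.single (⟨0, hk⟩ : Fin k) (1:ℝ) : Fin k → ℝ), ?_⟩
  have : ∑ i, ((Pi.single (⟨0, hk⟩ : Fin k) (1:ℝ) : Fin k → ℝ)) i ^ 2 = (1:ℝ) := by
    rw [Finset.sum_eq_single ⟨0, hk⟩]
    · simp
    · intro b _ hb; rw [Pi.single_apply, if_neg hb]; ring
    · intro h; exact absurd (Finset.mem_univ _) h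
  simp [vecNorm, this]

lemma main_lemma {k m' : ℕ} (A : Matrix (Fin k) (Fin k) ℝ) (B : Matrix (Fin m') (Fin k) ℝ)
    (hid : Aᵀ * A + Bᵀ * B = 1) (hA : IsUnit A) :
    specNorm B / sigmaMin A = specNorm (B * A⁻¹) := by
  have hdet : IsUnit A.det := (isUnit_iff_isUnit_det A).mp hA
  have hAinvA : A⁻¹ * A = 1 := nonsing_inv_mul A hdet
  have hAAinv : A * A⁻¹ = 1 := mul_nonsing_inv A hdet
  rcases Nat.eq_zero_or_pos k with hk | hk
  · subst hk
    have hempty : ∀ (x : Fin 0 → ℝ), vecNorm x ≠ 1 := by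
      intro x; simp [vecNorm]
    have e1 : {c : ℝ | ∃ x : Fin 0 → ℝ, vecNorm x = 1 ∧ c = vecNorm (B.mulVec x)} = ∅ := by
      ext c; simp only [Set.mem_setOf_eq, Set.mem_empty_iff_false, iff_false]
      rintro ⟨x, hx, -⟩; exact hempty x hx
    have e2 : {c : ℝ | ∃ x : Fin 0 → ℝ, vecNorm x = 1 ∧ c = vecNorm (A.mulVec x)} = ∅ := by
      ext c; simp only [Set.mem_setOf_eq, Set.mem_empty_iff_false, iff_false]
      rintro ⟨x, hx, -⟩; exact hempty x hx
    have e3 : {c : ℝ | ∃ x : Fin 0 → ℝ, vecNorm x = 1 ∧ c = vecNorm ((B * A⁻¹).mulVec x)} = ∅ := by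
      ext c; simp only [Set.mem_setOf_eq, Set.mem_empty_iff_false, iff_false]
      rintro ⟨x, hx, -⟩; exact hempty x hx
    rw [specNorm, specNorm, sigmaMin, e1, e2, e3, Real.sSup_empty, Real.sInf_empty]
    norm_num
  -- k > 0
  have hcont : Continuous fun x : Fin k → ℝ => vecNorm (A.mulVec x) :=
    vecNorm_continuous.comp (Matrix.mulVecLin A).continuous_of_finiteDimensional
  obtain ⟨x₀, hx₀S, hmin⟩ :=
    sphere_compact.exists_isMinOn (sphere_nonempty hk) hcont.continuousOn
  set c₀ := vecNorm (A.mulVec x₀) with hc₀def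
  have hx₀ : vecNorm x₀ = 1 := hx₀S
  have hc₀nonneg : 0 ≤ c₀ := vecNorm_nonneg _
  have hc₀pos : 0 < c₀ := by
    rcases hc₀nonneg.lt_or_eq with h | h
    · exact h
    · exfalso
      have hz : A.mulVec x₀ = 0 := vecNorm_eq_zero h.symm
      have : x₀ = 0 := by
        have := congrArg (A⁻¹.mulVec) hz
        rwa [mulVec_mulVec, hAinvA, one_mulVec, mulVec_zero] at this
      rw [this] at hx₀
      have : vecNorm (0 : Fin k → ℝ) = 0 := by simp [vecNorm]
      rw [this] at hx₀; exact one_ne_zero hx₀.symm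
  have hleast : IsLeast {c : ℝ | ∃ x : Fin k → ℝ, vecNorm x = 1 ∧ c = vecNorm (A.mulVec x)} c₀ := by
    constructor
    · exact ⟨x₀, hx₀, rfl⟩
    · rintro c ⟨x, hx, rfl⟩; exact hmin hx
  have hsig : sigmaMin A = c₀ := hleast.csInf_eq
  set s := Real.sqrt (1 - c₀ ^ 2) with hsdef
  have hsnonneg : 0 ≤ s := Real.sqrt_nonneg _
  -- general fact: for unit x, vecNorm (B *ᵥ x) = √(1 - vecNorm (A *ᵥ x)^2)
  have hBnorm : ∀ x : Fin k → ℝ, vecNorm x = 1 →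
      vecNorm (B.mulVec x) = Real.sqrt (1 - vecNorm (A.mulVec x) ^ 2) := by
    intro x hx
    have hkey := key_identity A B hid x
    rw [hx, one_pow] at hkey
    have : vecNorm (B.mulVec x) ^ 2 = 1 - vecNorm (A.mulVec x) ^ 2 := by linarith
    rw [← this, Real.sqrt_sq (vecNorm_nonneg _)]
  -- lower bdd comparison
  have hsqle : ∀ a : ℝ, c₀ ≤ a → Real.sqrt (1 - a ^ 2) ≤ s := by
    intro a ha
    apply Real.sqrt_le_sqrt
    have : c₀ ^ 2 ≤ a ^ 2 := pow_le_pow_left₀ hc₀nonneg ha 2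
    linarith
  have hgreatB : IsGreatest {c : ℝ | ∃ x : Fin k → ℝ, vecNorm x = 1 ∧ c = vecNorm (B.mulVec x)} s := by
    constructor
    · exact ⟨x₀, hx₀, (hBnorm x₀ hx₀).symm⟩
    · rintro c ⟨x, hx, rfl⟩
      rw [hBnorm x hx]
      exact hsqle _ (hleast.2 ⟨x, hx, rfl⟩)
  have hspecB : specNorm B = s := hgreatB.csSup_eq
  -- now the B * A⁻¹ part
  have hgreatBA : IsGreatest
      {c : ℝ | ∃ x : Fin k → ℝ, vecNorm x = 1 ∧ c = vecNorm ((B * A⁻¹).mulVec x)} (s / c₀) := by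
    constructor
    · refine ⟨c₀⁻¹ • A.mulVec x₀, ?_, ?_⟩
      · rw [vecNorm_smul, abs_of_pos (inv_pos.mpr hc₀pos), ← hc₀def, inv_mul_cancel₀ hc₀pos.ne']
      · rw [← mulVec_mulVec, mulVec_smul, mulVec_mulVec, hAinvA, one_mulVec, mulVec_smul,
          vecNorm_smul, abs_of_pos (inv_pos.mpr hc₀pos), hBnorm x₀ hx₀, ← hc₀def, ← hsdef]
        ring
    · rintro c ⟨z, hz, rfl⟩
      set w := A⁻¹.mulVec z with hwdef
      have hAw : A.mulVec w = z := by
        rw [hwdef, mulVec_mulVec, hAAinv, one_mulVec]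
      have hwne : w ≠ 0 := by
        intro h
        rw [h, mulVec_zero] at hAw
        have : vecNorm z = 0 := by rw [← hAw]; simp [vecNorm]
        rw [this] at hz; exact one_ne_zero hz.symm
      set t := vecNorm w with htdef
      have htpos : 0 < t := by
        rcases (vecNorm_nonneg w).lt_or_eq with h | h
        · exact h
        · exact absurd (vecNorm_eq_zero h.symm) hwne
      set x := t⁻¹ • w with hxdef
      have hx1 : vecNorm x = 1 := by
        rw [hxdef, vecNorm_smul, abs_of_pos (inv_pos.mpr htpos), ← htdef,
          inv_mul_cancel₀ htpos.ne']
      have hAx : vecNorm (A.mulVec x) = t⁻¹ := by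
        rw [hxdef, mulVec_smul, vecNorm_smul, abs_of_pos (inv_pos.mpr htpos), hAw, hz, mul_one]
      have hc₀le : c₀ ≤ t⁻¹ := by
        have := hleast.2 ⟨x, hx1, rfl⟩
        rwa [hAx] at this
      have hval : vecNorm ((B * A⁻¹).mulVec z) = Real.sqrt (1 - (t⁻¹) ^ 2) / t⁻¹ := by
        rw [← mulVec_mulVec, ← hwdef]
        have hw : w = t • x := by
          rw [hxdef, smul_smul, mul_inv_cancel₀ htpos.ne', one_smul]
        rw [hw, mulVec_smul, vecNorm_smul, abs_of_pos htpos, hBnorm x hx1, hAx]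
        rw [div_eq_mul_inv, inv_inv, mul_comm]
      rw [hval]
      exact div_le_div₀ hsnonneg (hsqle _ hc₀le) hc₀pos hc₀le
  have hspecBA : specNorm (B * A⁻¹) = s / c₀ := hgreatBA.csSup_eq
  rw [hspecB, hsig, hspecBA]

theorem stmt_1 {n k : ℕ} (hkn : k ≤ n)
    (X Y : Matrix (Fin n) (Fin k) ℝ)
    (Xp Yp : Matrix (Fin n) (Fin (n - k)) ℝ)
    (hX : Xᵀ * X = 1) (hY : Yᵀ * Y = 1)
    (hXp : Xpᵀ * Xp = 1) (hXpX : Xpᵀ * X = 0) (hXfull : X * Xᵀ + Xp * Xpᵀ = 1)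
    (hYp : Ypᵀ * Yp = 1) (hYpY : Ypᵀ * Y = 0) (hYfull : Y * Yᵀ + Yp * Ypᵀ = 1)
    (hinv : IsUnit (Xᵀ * Y)) :
    specNorm (Xpᵀ * Y) / sigmaMin (Xᵀ * Y) = specNorm (Xpᵀ * Y * (Xᵀ * Y)⁻¹) := by
  have hid : (Xᵀ * Y)ᵀ * (Xᵀ * Y) + (Xpᵀ * Y)ᵀ * (Xpᵀ * Y) = 1 := by
    simp only [transpose_mul, transpose_transpose]
    have h1 : Yᵀ * ((X * Xᵀ + Xp * Xpᵀ) * Y) = 1 := by rw [hXfull, Matrix.one_mul, hY]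
    calc Yᵀ * X * (Xᵀ * Y) + Yᵀ * Xp * (Xpᵀ * Y)
        = Yᵀ * ((X * Xᵀ + Xp * Xpᵀ) * Y) := by
          rw [Matrix.add_mul, Matrix.mul_add]
          rw [Matrix.mul_assoc Yᵀ X, Matrix.mul_assoc Yᵀ Xp, Matrix.mul_assoc X,
            Matrix.mul_assoc Xp]
      _ = 1 := h1
  exact main_lemma _ _ hid hinv
end

section
/- Let n, k, d be positive integers, μ₀ ≥ 1, δ ∈ (0,1), β ∈ (0, 1−δ), and set τ = (1−β−δ)/2 and α = (1−β−δ)/(12μ₀k). Let Ω ⊆ [n]×[n] be such that for every j ∈ [n] the set S_j = { i : (i,j) ∈ Ω } has exactly d elements. Let u_1, …, u_n ∈ ℝ^k satisfy ‖u_i‖₂ ≤ √(5μ₀k/n), and let u_1*, …, u_n* ∈ ℝ^k satisfy ‖u_i*‖₂ ≤ √(μ₀k/n). Define S_b(β) = { j ∈ [n] : ‖(n/d)·Σ_{i∈S_j} u_i u_iᵀ − I‖₂ > 1−β }, Q(τ) = { i ∈ [n] : ‖u_i u_iᵀ − u_i* u_i*ᵀ‖₂ > τ/n }, S_{b,1}(τ,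 α) = { j ∈ [n] : |S_j ∩ Q(τ)| ≥ αd }, and S_{b,2}(δ) = { j ∈ [n] : ‖(n/d)·Σ_{i∈S_j} u_i* u_i*ᵀ − I‖₂ > δ }. Then S_b(β) ⊆ S_{b,1}(τ, α) ∪ S_{b,2}(δ); in particular |S_b(β)| ≤ |S_{b,1}(τ, α)| + |S_{b,2}(δ)|. -/
open Matrix
open scoped Classical

/-- The left neighborhood `S_j = {i : (i,j) ∈ Ω}`. -/
def Sj {n : ℕ} (Ω : Finset (Fin n × Fin n)) (j : Fin n) : Finset (Fin n) :=
  Finset.univ.filter fun i => (i, j) ∈ Ω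

/-- The set of `bad` columns. -/
noncomputable def Sb {n k : ℕ} (Ω : Finset (Fin n × Fin n)) (d : ℕ)
    (u : Fin n → Fin k → ℝ) (β : ℝ) : Finset (Fin n) :=
  Finset.univ.filter fun j =>
    1 - β < specNorm (((n : ℝ) / d) • ∑ i ∈ Sj Ω j, vecMulVec (u i) (u i) - 1)

/-- The set `Q(τ)` of rows where the outer products of `u` and `u*` differ. -/
noncomputable def Qset {n k : ℕ} (u ustar : Fin n → Fin k → ℝ) (τ : ℝ) : Finset (Fin n) :=
  Finset.univ.filter fun i =>
    τ / n < specNorm (vecMulVec (u i) (u i) - vecMulVec (ustar i) (ustar i))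

/-- The set `S_{b,1}(τ,α)` of columns with at least `αd` neighbors in `Q(τ)`. -/
noncomputable def Sb1 {n k : ℕ} (Ω : Finset (Fin n × Fin n)) (d : ℕ)
    (u ustar : Fin n → Fin k → ℝ) (τ α : ℝ) : Finset (Fin n) :=
  Finset.univ.filter fun j => α * d ≤ ((Sj Ω j ∩ Qset u ustar τ).card : ℝ)

/-- The set `S_{b,2}(δ)`. -/
noncomputable def Sb2 {n k : ℕ} (Ω : Finset (Fin n × Fin n)) (d : ℕ)
    (ustar : Fin n → Fin k → ℝ) (δ : ℝ) : Finset (Fin n) :=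
  Finset.univ.filter fun j =>
    δ < specNorm (((n : ℝ) / d) • ∑ i ∈ Sj Ω j, vecMulVec (ustar i) (ustar i) - 1)

/-!
Split the column matrix as
`(n/d) • ∑ (u_i u_iᵀ - u*_i u*_iᵀ) + ((n/d) • ∑ u*_i u*_iᵀ - I)`.
For a column outside `S_{b,1} ∪ S_{b,2}` the second term has norm at most `δ`; fewer than `αd`
summands of the first lie in `Q(τ)`, each of norm at most `‖u_i‖² + ‖u*_i‖² ≤ 6μ₀k/n`, and the
other (at most `d`) summands have norm at most `τ/n`. The triangle inequality bounds the column
norm by `6αμ₀k + τ + δ = 1 - β`.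
-/

open scoped Matrix.Norms.L2Operator
open WithLp Finset

lemma vecNorm_eq_norm {k : ℕ} (v : Fin k → ℝ) : vecNorm v = ‖toLp 2 v‖ := by
  simp [vecNorm, EuclideanSpace.norm_eq]

lemma specNorm_eq_l2_opNorm {m n : ℕ} (A : Matrix (Fin m) (Fin n) ℝ) : specNorm A = ‖A‖ := by
  rw [Matrix.l2_opNorm_def, ← ContinuousLinearMap.sSup_sphere_eq_norm, specNorm]
  congr 1
  ext c
  constructor
  · rintro ⟨x, hx, rfl⟩
    exact ⟨toLp 2 x, by simpa [vecNorm_eq_norm] using hx, by simp [vecNorm_eq_norm]⟩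
  · rintro ⟨x, hx, rfl⟩
    exact ⟨ofLp x, by simpa [vecNorm_eq_norm] using hx, by simp [vecNorm_eq_norm]; rfl⟩

lemma l2_opNorm_vecMulVec {m n : Type*} [Fintype m] [Fintype n] [DecidableEq n]
    (a : m → ℝ) (b : n → ℝ) : ‖vecMulVec a b‖ = ‖toLp 2 a‖ * ‖toLp 2 b‖ := by
  have h := InnerProductSpace.symm_toEuclideanLin_rankOne (𝕜 := ℝ) (toLp 2 a) (toLp 2 b)
  simp only [star_trivial] at h
  rw [Matrix.l2_opNorm_def, ← h, LinearEquiv.trans_apply, LinearEquiv.apply_symm_apply]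
  exact InnerProductSpace.norm_rankOne _ _

lemma specNorm_vecMulVec_sub_vecMulVec_le {k : ℕ} (a b : Fin k → ℝ) :
    specNorm (vecMulVec a a - vecMulVec b b) ≤ vecNorm a ^ 2 + vecNorm b ^ 2 := by
  rw [specNorm_eq_l2_opNorm, vecNorm_eq_norm, vecNorm_eq_norm, sq, sq,
    ← l2_opNorm_vecMulVec, ← l2_opNorm_vecMulVec]
  exact norm_sub_le _ _

lemma norm_sum_le_card_inter_mul_add_card_sdiff_mul {ι E : Type*} [SeminormedAddCommGroup E]
    [DecidableEq ι] (S Q : Finset ι) (f : ι → E) {L ε : ℝ}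
    (hL : ∀ i ∈ S ∩ Q, ‖f i‖ ≤ L) (hε : ∀ i ∈ S \ Q, ‖f i‖ ≤ ε) :
    ‖∑ i ∈ S, f i‖ ≤ #(S ∩ Q) * L + #(S \ Q) * ε := by
  rw [← sum_inter_add_sum_sdiff S Q]
  calc ‖∑ i ∈ S ∩ Q, f i + ∑ i ∈ S \ Q, f i‖
      ≤ ∑ i ∈ S ∩ Q, ‖f i‖ + ∑ i ∈ S \ Q, ‖f i‖ :=
        (norm_add_le _ _).trans (add_le_add (norm_sum_le _ _) (norm_sum_le _ _))
    _ ≤ #(S ∩ Q) * L + #(S \ Q) * ε := by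
        gcongr
        · simpa using sum_le_card_nsmul _ _ _ hL
        · simpa using sum_le_card_nsmul _ _ _ hε

lemma specNorm_smul_sum_sub_one_le {n k d : ℕ} (Ω : Finset (Fin n × Fin n))
    (hΩ : ∀ j : Fin n, #(Sj Ω j) = d) (u ustar : Fin n → Fin k → ℝ) (j : Fin n)
    {c τ L : ℝ} (hc : 0 ≤ c) (hτ : 0 ≤ τ)
    (hL : ∀ i, specNorm (vecMulVec (u i) (u i) - vecMulVec (ustar i) (ustar i)) ≤ L) :
    specNorm (c • ∑ i ∈ Sj Ω j, vecMulVec (u i) (u i) - 1) ≤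
      c * (#(Sj Ω j ∩ Qset u ustar τ) * L + d * (τ / n)) +
        specNorm (c • ∑ i ∈ Sj Ω j, vecMulVec (ustar i) (ustar i) - 1) := by
  set S := Sj Ω j
  set Q := Qset u ustar τ
  have hsplit : c • ∑ i ∈ S, vecMulVec (u i) (u i) - 1 =
      c • ∑ i ∈ S, (vecMulVec (u i) (u i) - vecMulVec (ustar i) (ustar i)) +
        (c • ∑ i ∈ S, vecMulVec (ustar i) (ustar i) - 1) := by
    rw [sum_sub_distrib, smul_sub]
    abel
  have hgood : ∀ i ∈ S \ Q,
      ‖vecMulVec (u i) (u i) - vecMulVec (ustar i) (ustar i)‖ ≤ τ / n := by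
    intro i hi
    simpa [Q, Qset, specNorm_eq_l2_opNorm] using (mem_sdiff.1 hi).2
  have hcard : (#(S \ Q) : ℝ) ≤ d := by
    exact_mod_cast (card_le_card sdiff_subset).trans (hΩ j).le
  simp only [specNorm_eq_l2_opNorm] at hL ⊢
  rw [hsplit]
  refine (norm_add_le _ _).trans (add_le_add_left ?_ _)
  rw [norm_smul, Real.norm_of_nonneg hc]
  gcongr
  refine (norm_sum_le_card_inter_mul_add_card_sdiff_mul S Q _ (fun i _ => hL i) hgood).trans ?_
  gcongr

lemma Sb_subset_Sb1_union_Sb2 {n k d : ℕ} (Ω : Finset (Fin n × Fin n))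
    (hΩ : ∀ j : Fin n, #(Sj Ω j) = d) (u ustar : Fin n → Fin k → ℝ) {β δ τ α L : ℝ}
    (hτ : 0 ≤ τ)
    (hL : ∀ i, specNorm (vecMulVec (u i) (u i) - vecMulVec (ustar i) (ustar i)) ≤ L)
    (hbudget : (n / d : ℝ) * (α * d * L + d * (τ / n)) + δ ≤ 1 - β) :
    Sb Ω d u β ⊆ Sb1 Ω d u ustar τ α ∪ Sb2 Ω d ustar δ := by
  intro j hj
  by_contra hj'
  simp only [Sb, Sb1, Sb2, mem_union, mem_filter, mem_univ, true_and, not_or, not_le,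
    not_lt] at hj hj'
  have hL0 : 0 ≤ L := (norm_nonneg _).trans (specNorm_eq_l2_opNorm _ ▸ hL j)
  have hgood : specNorm ((n / d : ℝ) • ∑ i ∈ Sj Ω j, vecMulVec (u i) (u i) - 1) ≤ 1 - β :=
    calc _ ≤ (n / d : ℝ) * (#(Sj Ω j ∩ Qset u ustar τ) * L + d * (τ / n)) +
            specNorm ((n / d : ℝ) • ∑ i ∈ Sj Ω j, vecMulVec (ustar i) (ustar i) - 1) :=
          specNorm_smul_sum_sub_one_le Ω hΩ u ustar j (by positivity) hτ hL
      _ ≤ (n / d : ℝ) * (α * d * L + d * (τ / n)) + δ := by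
          gcongr
          exacts [hj'.1.le, hj'.2]
      _ ≤ 1 - β := hbudget
  exact (hj.trans_le hgood).false

theorem stmt_4_general {n k d : ℕ} (hn : 0 < n) (hk : 0 < k) (hd : 0 < d)
    (μ₀ δ β : ℝ) (hμ : 1 ≤ μ₀)
    (hβ : β ∈ Set.Ioo (0 : ℝ) (1 - δ))
    (Ω : Finset (Fin n × Fin n))
    (hΩ : ∀ j : Fin n, (Sj Ω j).card = d)
    (u ustar : Fin n → Fin k → ℝ)
    (hu : ∀ i, vecNorm (u i) ≤ Real.sqrt (5 * μ₀ * k / n))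
    (hustar : ∀ i, vecNorm (ustar i) ≤ Real.sqrt (μ₀ * k / n)) :
    Sb Ω d u β ⊆
      Sb1 Ω d u ustar ((1 - β - δ) / 2) ((1 - β - δ) / (12 * μ₀ * k)) ∪ Sb2 Ω d ustar δ ∧
    ((Sb Ω d u β).card ≤
      (Sb1 Ω d u ustar ((1 - β - δ) / 2) ((1 - β - δ) / (12 * μ₀ * k))).card
        + (Sb2 Ω d ustar δ).card) := by
  have hτ : 0 ≤ (1 - β - δ) / 2 := by linarith [hβ.2]
  set τ := (1 - β - δ) / 2
  set α := (1 - β - δ) / (12 * μ₀ * k)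
  have hL : ∀ i, specNorm (vecMulVec (u i) (u i) - vecMulVec (ustar i) (ustar i)) ≤
      6 * μ₀ * k / n := fun i => calc
    _ ≤ vecNorm (u i) ^ 2 + vecNorm (ustar i) ^ 2 := specNorm_vecMulVec_sub_vecMulVec_le _ _
    _ ≤ 5 * μ₀ * k / n + μ₀ * k / n := by
        gcongr
        · exact (Real.le_sqrt (Real.sqrt_nonneg _) (by positivity)).1 (hu i)
        · exact (Real.le_sqrt (Real.sqrt_nonneg _) (by positivity)).1 (hustar i)
    _ = 6 * μ₀ * k / n := by ring
  have hbudget : (n / d : ℝ) * (α * d * (6 * μ₀ * k / n) + d * (τ / n)) + δ = 1 - β := by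
    simp only [α, τ]
    field_simp
    ring
  have hsub := Sb_subset_Sb1_union_Sb2 Ω hΩ u ustar hτ hL hbudget.le
  exact ⟨hsub, (card_le_card hsub).trans (card_union_le _ _)⟩

theorem stmt_4 {n k d : ℕ} (hn : 0 < n) (hk : 0 < k) (hd : 0 < d)
    (μ₀ δ β : ℝ) (hμ : 1 ≤ μ₀) (hδ : δ ∈ Set.Ioo (0 : ℝ) 1)
    (hβ : β ∈ Set.Ioo (0 : ℝ) (1 - δ))
    (Ω : Finset (Fin n × Fin n))
    (hΩ : ∀ j : Fin n, (Sj Ω j).card = d)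
    (u ustar : Fin n → Fin k → ℝ)
    (hu : ∀ i, vecNorm (u i) ≤ Real.sqrt (5 * μ₀ * k / n))
    (hustar : ∀ i, vecNorm (ustar i) ≤ Real.sqrt (μ₀ * k / n)) :
    Sb Ω d u β ⊆
      Sb1 Ω d u ustar ((1 - β - δ) / 2) ((1 - β - δ) / (12 * μ₀ * k)) ∪ Sb2 Ω d ustar δ ∧
    ((Sb Ω d u β).card ≤
      (Sb1 Ω d u ustar ((1 - β - δ) / 2) ((1 - β - δ) / (12 * μ₀ * k))).card
        + (Sb2 Ω d ustar δ).card) :=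
  stmt_4_general hn hk hd μ₀ δ β hμ hβ Ω hΩ u ustar hu hustar
end
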